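/- arXiv:2403.04016 — 3 statements merged into one kernel-verified Lean document; each statement's English description precedes it below -/
import Mathlib

section
/- Let A ∈ ℝ^{n×n}, B ∈ ℝ^{n×m}, C ∈ ℝ^{m×n}, D ∈ ℝ^{m×m} with ‖D‖ < 1. Suppose x ∈ ℝ^n, w ∈ ℝ^m and λ ≥ 0 satisfy A x + B w = λ x and w = Φ(C x + D w). Then the function t ↦ e^{λ t} x is a solution of the feedback system Σ (with associated input t ↦ e^{λ t} w). In particular, ‖e^{λ t} x‖ ≥ ‖x‖ for all t ≥ 0, so if x ≠ 0 then this solution does not converge to 0 and Σ is not globally asymptotically stable. -/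
/-!
ReLU is positively homogeneous, so scaling the pair `(x, w)` by `e^{λ t} > 0` preserves the
feedback equation, while `A x + B w = λ x` makes `A (e^{λ t} x) + B (e^{λ t} w)` the derivative
`λ e^{λ t} x` of the ray. For `λ ≥ 0` the norm of the ray never drops below `‖x‖`.
-/

open Matrix Filter

/-- The rectified linear unit (ReLU) map, applied componentwise. -/
noncomputable def relu {m : ℕ} (q : Fin m → ℝ) : Fin m → ℝ := fun i => max (q i) 0

/-- The operator norm of a matrix induced by the Euclidean norm on `ℝ^m`. -/
noncomputable def opNorm {m : ℕ} (D : Matrix (Fin m) (Fin m) ℝ) : ℝ :=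
  ‖Matrix.toEuclideanCLM (𝕜 := ℝ) D‖

/-- The Euclidean norm of a vector in `ℝ^n`. -/
noncomputable def enorm' {n : ℕ} (x : Fin n → ℝ) : ℝ :=
  ‖(WithLp.equiv 2 (Fin n → ℝ)).symm x‖

/-- A solution of the feedback system `Σ`. -/
def IsSolution {n m : ℕ} (A : Matrix (Fin n) (Fin n) ℝ) (B : Matrix (Fin n) (Fin m) ℝ)
    (C : Matrix (Fin m) (Fin n) ℝ) (D : Matrix (Fin m) (Fin m) ℝ)
    (x : ℝ → Fin n → ℝ) : Prop :=
  ∃ w : ℝ → Fin m → ℝ, ∀ t ≥ (0:ℝ),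
    w t = relu (C.mulVec (x t) + D.mulVec (w t)) ∧
    HasDerivAt x (A.mulVec (x t) + B.mulVec (w t)) t

/-- Condition (i): Lyapunov stability of the origin for `Σ`. -/
def LyapunovStable {n m : ℕ} (A : Matrix (Fin n) (Fin n) ℝ) (B : Matrix (Fin n) (Fin m) ℝ)
    (C : Matrix (Fin m) (Fin n) ℝ) (D : Matrix (Fin m) (Fin m) ℝ) : Prop :=
  ∀ ε > (0:ℝ), ∃ δ > (0:ℝ), ∀ x : ℝ → Fin n → ℝ,
    IsSolution A B C D x → enorm' (x 0) < δ → ∀ t ≥ (0:ℝ), enorm' (x t) < ε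

/-- Global asymptotic stability of the origin for `Σ`. -/
def GloballyAsympStable {n m : ℕ} (A : Matrix (Fin n) (Fin n) ℝ) (B : Matrix (Fin n) (Fin m) ℝ)
    (C : Matrix (Fin m) (Fin n) ℝ) (D : Matrix (Fin m) (Fin m) ℝ) : Prop :=
  LyapunovStable A B C D ∧
    ∀ x : ℝ → Fin n → ℝ, IsSolution A B C D x → Tendsto x atTop (nhds 0)

lemma relu_smul_of_nonneg {m : ℕ} {c : ℝ} (hc : 0 ≤ c) (q : Fin m → ℝ) :
    relu (c • q) = c • relu q := by
  funext i
  simp [relu, mul_max_of_nonneg _ _ hc]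

lemma enorm'_smul {n : ℕ} (c : ℝ) (x : Fin n → ℝ) : enorm' (c • x) = |c| * enorm' x :=
  (norm_smul c ((WithLp.equiv 2 (Fin n → ℝ)).symm x)).trans (by rw [Real.norm_eq_abs, enorm'])

lemma hasDerivAt_exp_mul_smul {E : Type*} [NormedAddCommGroup E] [NormedSpace ℝ E]
    (l : ℝ) (x : E) (t : ℝ) :
    HasDerivAt (fun s : ℝ => Real.exp (l * s) • x) ((l * Real.exp (l * t)) • x) t := by
  simpa [mul_comm] using ((hasDerivAt_id t).const_mul l).exp.smul_const x

lemma not_tendsto_exp_mul_smul_nhds_zero {E : Type*} [NormedAddCommGroup E]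
    [NormedSpace ℝ E] {l : ℝ} (hl : 0 ≤ l) {x : E} (hx : x ≠ 0) :
    ¬ Tendsto (fun s : ℝ => Real.exp (l * s) • x) atTop (nhds 0) := by
  intro h
  have hlt : ∀ᶠ s in atTop, ‖Real.exp (l * s) • x‖ < ‖x‖ :=
    (tendsto_norm_zero.comp h).eventually_lt_const (norm_pos_iff.2 hx)
  obtain ⟨s, hs, hs0⟩ := (hlt.and (eventually_ge_atTop 0)).exists
  rw [norm_smul, Real.norm_of_nonneg (Real.exp_pos _).le] at hs
  have : 1 ≤ Real.exp (l * s) := Real.one_le_exp (mul_nonneg hl hs0)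
  nlinarith [norm_nonneg x]

section ExpRay

variable {n m : ℕ} {A : Matrix (Fin n) (Fin n) ℝ} {B : Matrix (Fin n) (Fin m) ℝ}
  {C : Matrix (Fin m) (Fin n) ℝ} {D : Matrix (Fin m) (Fin m) ℝ} {x : Fin n → ℝ}
  {w : Fin m → ℝ} {l : ℝ}

lemma relu_feedback_smul_of_nonneg (hw : w = relu (C.mulVec x + D.mulVec w)) {c : ℝ}
    (hc : 0 ≤ c) : c • w = relu (C.mulVec (c • x) + D.mulVec (c • w)) := by
  rw [mulVec_smul, mulVec_smul, ← smul_add, relu_smul_of_nonneg hc, ← hw]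

lemma hasDerivAt_exp_ray (heig : A.mulVec x + B.mulVec w = l • x) (t : ℝ) :
    HasDerivAt (fun s : ℝ => Real.exp (l * s) • x)
      (A.mulVec (Real.exp (l * t) • x) + B.mulVec (Real.exp (l * t) • w)) t := by
  rw [mulVec_smul, mulVec_smul, ← smul_add, heig, smul_smul, mul_comm]
  exact hasDerivAt_exp_mul_smul l x t

end ExpRay

theorem exp_ray_is_unstable_solution_general {n m : ℕ}
    (A : Matrix (Fin n) (Fin n) ℝ) (B : Matrix (Fin n) (Fin m) ℝ)
    (C : Matrix (Fin m) (Fin n) ℝ) (D : Matrix (Fin m) (Fin m) ℝ)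
    (x : Fin n → ℝ) (w : Fin m → ℝ) (l : ℝ) (hl : 0 ≤ l)
    (heig : A.mulVec x + B.mulVec w = l • x)
    (hw : w = relu (C.mulVec x + D.mulVec w)) :
    (∀ t ≥ (0:ℝ),
        Real.exp (l * t) • w =
          relu (C.mulVec (Real.exp (l * t) • x) + D.mulVec (Real.exp (l * t) • w)) ∧
        HasDerivAt (fun s : ℝ => Real.exp (l * s) • x)
          (A.mulVec (Real.exp (l * t) • x) + B.mulVec (Real.exp (l * t) • w)) t) ∧
    IsSolution A B C D (fun s : ℝ => Real.exp (l * s) • x) ∧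
    (∀ t ≥ (0:ℝ), enorm' x ≤ enorm' (Real.exp (l * t) • x)) ∧
    (x ≠ 0 → ¬ Tendsto (fun s : ℝ => Real.exp (l * s) • x) atTop (nhds 0)) ∧
    (x ≠ 0 → ¬ GloballyAsympStable A B C D) := by
  have hray : ∀ t ≥ (0:ℝ),
      Real.exp (l * t) • w =
          relu (C.mulVec (Real.exp (l * t) • x) + D.mulVec (Real.exp (l * t) • w)) ∧
        HasDerivAt (fun s : ℝ => Real.exp (l * s) • x)
          (A.mulVec (Real.exp (l * t) • x) + B.mulVec (Real.exp (l * t) • w)) t :=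
    fun t _ => ⟨relu_feedback_smul_of_nonneg hw (Real.exp_pos _).le, hasDerivAt_exp_ray heig t⟩
  have hsol : IsSolution A B C D (fun s : ℝ => Real.exp (l * s) • x) :=
    ⟨fun s => Real.exp (l * s) • w, hray⟩
  have hnorm : ∀ t ≥ (0:ℝ), enorm' x ≤ enorm' (Real.exp (l * t) • x) := fun t ht => by
    rw [enorm'_smul, abs_of_pos (Real.exp_pos _)]
    exact le_mul_of_one_le_left (norm_nonneg _) (Real.one_le_exp (mul_nonneg hl ht))
  have hnot := fun hx : x ≠ 0 => not_tendsto_exp_mul_smul_nhds_zero hl hx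
  exact ⟨hray, hsol, hnorm, hnot, fun hx hgas => hnot hx (hgas.2 _ hsol)⟩

/-- If `A x + B w = λ x` and `w = Φ(C x + D w)` with `λ ≥ 0`, then `t ↦ e^{λ t} x` is a
solution of `Σ` with associated input `t ↦ e^{λ t} w`; in particular
`‖e^{λ t} x‖ ≥ ‖x‖` for all `t ≥ 0`, so if `x ≠ 0` then `Σ` is not globally
asymptotically stable. -/
theorem exp_ray_is_unstable_solution {n m : ℕ}
    (A : Matrix (Fin n) (Fin n) ℝ) (B : Matrix (Fin n) (Fin m) ℝ)
    (C : Matrix (Fin m) (Fin n) ℝ) (D : Matrix (Fin m) (Fin m) ℝ)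
    (hD : opNorm D < 1)
    (x : Fin n → ℝ) (w : Fin m → ℝ) (l : ℝ) (hl : 0 ≤ l)
    (heig : A.mulVec x + B.mulVec w = l • x)
    (hw : w = relu (C.mulVec x + D.mulVec w)) :
    (∀ t ≥ (0:ℝ),
        Real.exp (l * t) • w =
          relu (C.mulVec (Real.exp (l * t) • x) + D.mulVec (Real.exp (l * t) • w)) ∧
        HasDerivAt (fun s : ℝ => Real.exp (l * s) • x)
          (A.mulVec (Real.exp (l * t) • x) + B.mulVec (Real.exp (l * t) • w)) t) ∧
    IsSolution A B C D (fun s : ℝ => Real.exp (l * s) • x) ∧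
    (∀ t ≥ (0:ℝ), enorm' x ≤ enorm' (Real.exp (l * t) • x)) ∧
    (x ≠ 0 → ¬ Tendsto (fun s : ℝ => Real.exp (l * s) • x) atTop (nhds 0)) ∧
    (x ≠ 0 → ¬ GloballyAsympStable A B C D) :=
  exp_ray_is_unstable_solution_general A B C D x w l hl heig hw
end

section
/- Let A ∈ ℝ^{n×n}, B ∈ ℝ^{n×m}, C ∈ ℝ^{m×n}, D ∈ ℝ^{m×m} with ‖D‖ < 1. If there exist a positive definite P ∈ S^n and Π ∈ Π_NN such that [[P A + A^T P, P B],[B^T P, 0]] + [[C, D],[0, I_m]]^T Π [[C, D],[0, I_m]] is negative definite, then the feedback system Σ is globally asymptotically stable. -/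
open Matrix Filter

/-- The block matrix `E = [[-I, I],[0, I]]`. -/
def Emat (m : ℕ) : Matrix (Fin m ⊕ Fin m) (Fin m ⊕ Fin m) ℝ :=
  fromBlocks (-1) 1 0 1

/-- The block matrix `𝒥(J) = [[0, J],[J, 0]]`. -/
def calJ {m : ℕ} (J : Matrix (Fin m) (Fin m) ℝ) : Matrix (Fin m ⊕ Fin m) (Fin m ⊕ Fin m) ℝ :=
  fromBlocks 0 J J 0

/-- The multiplier class `Π_NN`. -/
def PiNN (m : ℕ) : Set (Matrix (Fin m ⊕ Fin m) (Fin m ⊕ Fin m) ℝ) :=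
  {P | ∃ (Q : Matrix (Fin m ⊕ Fin m) (Fin m ⊕ Fin m) ℝ) (J : Matrix (Fin m) (Fin m) ℝ),
    J.IsDiag ∧ Q.IsSymm ∧ (∀ i j, 0 ≤ Q i j) ∧ P = (Emat m)ᵀ * (Q + calJ J) * Emat m}

/-!
`V x = xᵀ P x` is a Lyapunov function. Along a solution, with `ξ = (x, w)` and `q = C x + D w`,
`V̇ = ξᵀ N ξ` for the first block `N` of the LMI, and the second block evaluates to
`(q, relu q)ᵀ Π (q, relu q) ≥ 0` for every `Π ∈ Π_NN`. Hence the LMI gives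
`V̇ ≤ -ε |ξ|² ≤ -ε |x|² ≤ -(ε / c₂) V`, and Grönwall yields exponential decay of `V`, which is
comparable to `|x|²` since a positive definite quadratic form is bounded below on the unit sphere.
-/

section Homogeneous

variable {E : Type*} [NormedAddCommGroup E] [NormedSpace ℝ E] {f : E → ℝ}

lemma map_zero_of_homogeneous (hsmul : ∀ (c : ℝ) v, f (c • v) = c ^ 2 * f v) : f 0 = 0 := by
  simpa using hsmul 0 0

lemma eq_norm_sq_mul_of_homogeneous (hsmul : ∀ (c : ℝ) v, f (c • v) = c ^ 2 * f v) (v : E) :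
    f v = ‖v‖ ^ 2 * f (‖v‖⁻¹ • v) := by
  rcases eq_or_ne v 0 with rfl | hv
  · simp [map_zero_of_homogeneous hsmul]
  · rw [hsmul]
    field_simp

lemma exists_pos_mul_norm_sq_le_of_homogeneous [FiniteDimensional ℝ E] (hf : Continuous f)
    (hsmul : ∀ (c : ℝ) v, f (c • v) = c ^ 2 * f v) (hpos : ∀ v ≠ 0, 0 < f v) :
    ∃ c > 0, ∀ v, c * ‖v‖ ^ 2 ≤ f v := by
  rcases subsingleton_or_nontrivial E with hE | hE
  · refine ⟨1, one_pos, fun v => ?_⟩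
    simp [Subsingleton.elim v 0, map_zero_of_homogeneous hsmul]
  obtain ⟨u, hu, hmin⟩ := (isCompact_sphere (0 : E) 1).exists_isMinOn
    (NormedSpace.sphere_nonempty.2 zero_le_one) hf.continuousOn
  refine ⟨f u, hpos u (ne_zero_of_mem_unit_sphere ⟨u, hu⟩), fun v => ?_⟩
  rcases eq_or_ne v 0 with rfl | hv
  · simp [map_zero_of_homogeneous hsmul]
  rw [eq_norm_sq_mul_of_homogeneous hsmul v, mul_comm]
  gcongr
  exact hmin (by simpa using norm_smul_inv_norm (𝕜 := ℝ) hv)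

lemma exists_pos_le_mul_norm_sq_of_homogeneous [FiniteDimensional ℝ E] (hf : Continuous f)
    (hsmul : ∀ (c : ℝ) v, f (c • v) = c ^ 2 * f v) :
    ∃ C > 0, ∀ v, f v ≤ C * ‖v‖ ^ 2 := by
  obtain ⟨C, hC⟩ := (isCompact_sphere (0 : E) 1).exists_bound_of_continuousOn hf.continuousOn
  refine ⟨max C 1, by positivity, fun v => ?_⟩
  rw [eq_norm_sq_mul_of_homogeneous hsmul v, mul_comm (max C 1)]
  gcongr
  rcases eq_or_ne v 0 with rfl | hv
  · simp [map_zero_of_homogeneous hsmul]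
  · exact (le_abs_self _).trans ((hC _ (by simpa using norm_smul_inv_norm (𝕜 := ℝ) hv)).trans
      (le_max_left _ _))

end Homogeneous

section QuadraticForm

variable {ι : Type*} [Fintype ι]

lemma norm_toLp_sq (v : ι → ℝ) : ‖WithLp.toLp 2 v‖ ^ 2 = v ⬝ᵥ v := by
  rw [EuclideanSpace.real_norm_sq_eq, dotProduct]
  simp [sq]

lemma continuous_dotProduct_mulVec (M : Matrix ι ι ℝ) :
    Continuous fun u : EuclideanSpace ℝ ι => u.ofLp ⬝ᵥ M *ᵥ u.ofLp := by
  fun_prop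

lemma dotProduct_mulVec_smul (M : Matrix ι ι ℝ) (c : ℝ) (v : ι → ℝ) :
    (c • v) ⬝ᵥ M *ᵥ (c • v) = c ^ 2 * (v ⬝ᵥ M *ᵥ v) := by
  rw [mulVec_smul, smul_dotProduct, dotProduct_smul, smul_eq_mul, smul_eq_mul]
  ring

lemma Matrix.PosDef.exists_pos_mul_dotProduct_self_le {M : Matrix ι ι ℝ} (hM : M.PosDef) :
    ∃ c > 0, ∀ v, c * (v ⬝ᵥ v) ≤ v ⬝ᵥ M *ᵥ v := by
  obtain ⟨c, hc, h⟩ := exists_pos_mul_norm_sq_le_of_homogeneous (continuous_dotProduct_mulVec M)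
    (fun c u => by simpa using dotProduct_mulVec_smul M c u.ofLp)
    (fun u hu => by simpa using hM.dotProduct_mulVec_pos (x := u.ofLp) (by simpa using hu))
  exact ⟨c, hc, fun v => by simpa [norm_toLp_sq] using h (WithLp.toLp 2 v)⟩

lemma Matrix.exists_pos_dotProduct_mulVec_le (M : Matrix ι ι ℝ) :
    ∃ C > 0, ∀ v, v ⬝ᵥ M *ᵥ v ≤ C * (v ⬝ᵥ v) := by
  obtain ⟨C, hC, h⟩ := exists_pos_le_mul_norm_sq_of_homogeneous (continuous_dotProduct_mulVec M)
    (fun c u => by simpa using dotProduct_mulVec_smul M c u.ofLp)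
  exact ⟨C, hC, fun v => by simpa [norm_toLp_sq] using h (WithLp.toLp 2 v)⟩

end QuadraticForm

section BlockAlgebra

variable {R k l : Type*} [CommSemiring R] [Fintype k] [Fintype l]

lemma dotProduct_transpose_mul_mul_mulVec (G : Matrix k l R) (N : Matrix k k R) (v : l → R) :
    v ⬝ᵥ (Gᵀ * N * G) *ᵥ v = (G *ᵥ v) ⬝ᵥ N *ᵥ (G *ᵥ v) := by
  rw [← mulVec_mulVec, ← mulVec_mulVec, dotProduct_mulVec, vecMul_transpose]

lemma sumElim_dotProduct_fromBlocks_mulVec (M₁ : Matrix k k R) (M₂ : Matrix k l R)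
    (M₃ : Matrix l k R) (M₄ : Matrix l l R) (x : k → R) (w : l → R) :
    Sum.elim x w ⬝ᵥ fromBlocks M₁ M₂ M₃ M₄ *ᵥ Sum.elim x w
      = x ⬝ᵥ M₁ *ᵥ x + x ⬝ᵥ M₂ *ᵥ w + (w ⬝ᵥ M₃ *ᵥ x + w ⬝ᵥ M₄ *ᵥ w) := by
  rw [fromBlocks_mulVec, Sum.elim_comp_inl, Sum.elim_comp_inr, sumElim_dotProduct_sumElim,
    dotProduct_add, dotProduct_add]

end BlockAlgebra

section Multiplier

variable {ι : Type*} [Fintype ι]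

lemma dotProduct_mulVec_nonneg_of_nonneg {Q : Matrix ι ι ℝ} (hQ : ∀ i j, 0 ≤ Q i j)
    {v : ι → ℝ} (hv : 0 ≤ v) : 0 ≤ v ⬝ᵥ Q *ᵥ v :=
  dotProduct_nonneg_of_nonneg hv fun i => dotProduct_nonneg_of_nonneg (hQ i) hv

lemma dotProduct_mulVec_eq_zero_of_isDiag [DecidableEq ι] {J : Matrix ι ι ℝ} (hJ : J.IsDiag)
    {u v : ι → ℝ} (huv : ∀ i, u i * v i = 0) : u ⬝ᵥ J *ᵥ v = 0 := by
  rw [← hJ.diagonal_diag]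
  refine Finset.sum_eq_zero fun i _ => ?_
  rw [mulVec_diagonal, mul_left_comm, huv, mul_zero]

lemma relu_sub_self_mul_relu {m : ℕ} (q : Fin m → ℝ) (i : Fin m) :
    (relu q - q) i * relu q i = 0 := by
  simp only [relu, Pi.sub_apply]
  rcases le_total (q i) 0 with h | h
  · rw [max_eq_right h, mul_zero]
  · rw [max_eq_left h, sub_self, zero_mul]

lemma Emat_mulVec_sumElim {m : ℕ} (q w : Fin m → ℝ) :
    Emat m *ᵥ Sum.elim q w = Sum.elim (w - q) w := by
  rw [Emat, fromBlocks_mulVec]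
  simp [neg_mulVec, neg_add_eq_sub]

/-- After `E`, the pair `(q, relu q)` becomes `(relu q - q, relu q)`: entrywise nonnegative, so `Q`
contributes `≥ 0`, and complementary, so the diagonal `J` contributes `0`. -/
lemma dotProduct_mulVec_sumElim_relu_nonneg {m : ℕ} {Pi : Matrix (Fin m ⊕ Fin m) (Fin m ⊕ Fin m) ℝ}
    (hPi : Pi ∈ PiNN m) (q : Fin m → ℝ) :
    0 ≤ Sum.elim q (relu q) ⬝ᵥ Pi *ᵥ Sum.elim q (relu q) := by
  obtain ⟨Q, J, hJ, -, hQ, rfl⟩ := hPi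
  have hrelu : 0 ≤ relu q := fun i => le_max_right _ _
  have hv : 0 ≤ Sum.elim (relu q - q) (relu q) := by
    rintro (i | i)
    · exact sub_nonneg.2 (le_max_left _ _)
    · exact hrelu i
  have hJ₁ : (relu q - q) ⬝ᵥ J *ᵥ relu q = 0 :=
    dotProduct_mulVec_eq_zero_of_isDiag hJ (relu_sub_self_mul_relu q)
  have hJ₂ : relu q ⬝ᵥ J *ᵥ (relu q - q) = 0 :=
    dotProduct_mulVec_eq_zero_of_isDiag hJ fun i => by rw [mul_comm, relu_sub_self_mul_relu]
  rw [dotProduct_transpose_mul_mul_mulVec, Emat_mulVec_sumElim, add_mulVec, dotProduct_add, calJ,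
    sumElim_dotProduct_fromBlocks_mulVec, hJ₁, hJ₂]
  simpa using dotProduct_mulVec_nonneg_of_nonneg hQ hv

end Multiplier

section Derivatives

variable {ι : Type*} [Fintype ι] {x y : ℝ → ι → ℝ} {x' y' : ι → ℝ} {t : ℝ}

lemma HasDerivAt.dotProduct (hx : HasDerivAt x x' t) (hy : HasDerivAt y y' t) :
    HasDerivAt (fun s => x s ⬝ᵥ y s) (x' ⬝ᵥ y t + x t ⬝ᵥ y') t := by
  have := HasDerivAt.fun_sum (u := Finset.univ) (A := fun i s => x s i * y s i) fun i _ =>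
    (hasDerivAt_pi.1 hx i).mul (hasDerivAt_pi.1 hy i)
  rw [Finset.sum_add_distrib] at this
  exact this

lemma HasDerivAt.mulVec (M : Matrix ι ι ℝ) (hx : HasDerivAt x x' t) :
    HasDerivAt (fun s => M *ᵥ x s) (M *ᵥ x') t :=
  hasDerivAt_pi.2 fun i => by
    have := (hasDerivAt_const t (M i)).dotProduct hx
    rw [zero_dotProduct, zero_add] at this
    exact this

lemma HasDerivAt.dotProduct_mulVec (M : Matrix ι ι ℝ) (hx : HasDerivAt x x' t) :
    HasDerivAt (fun s => x s ⬝ᵥ M *ᵥ x s) (x' ⬝ᵥ M *ᵥ x t + x t ⬝ᵥ M *ᵥ x') t :=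
  hx.dotProduct (hx.mulVec M)

lemma le_mul_exp_of_hasDerivAt_le {f f' : ℝ → ℝ} {K : ℝ}
    (hf : ∀ s ≥ 0, HasDerivAt f (f' s) s) (hbound : ∀ s ≥ 0, f' s ≤ K * f s) (ht : 0 ≤ t) :
    f t ≤ f 0 * Real.exp (K * t) := by
  have := le_gronwallBound_of_liminf_deriv_right_le (δ := f 0) (ε := 0) (b := t)
    (fun s hs => (hf s hs.1).continuousAt.continuousWithinAt)
    (fun s hs _ hr => (hf s hs.1).hasDerivWithinAt.liminf_right_slope_le hr) le_rfl
    (fun s hs => by simpa using hbound s hs.1) t ⟨ht, le_rfl⟩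
  simpa [gronwallBound_ε0] using this

end Derivatives

section Stability

variable {n m : ℕ} {A : Matrix (Fin n) (Fin n) ℝ} {B : Matrix (Fin n) (Fin m) ℝ}
  {C : Matrix (Fin m) (Fin n) ℝ} {D : Matrix (Fin m) (Fin m) ℝ}

lemma enorm'_nonneg (y : Fin n → ℝ) : 0 ≤ enorm' y := norm_nonneg _

lemma enorm'_sq (y : Fin n → ℝ) : enorm' y ^ 2 = y ⬝ᵥ y := norm_toLp_sq y

lemma tendsto_zero_of_tendsto_enorm' {l : Filter ℝ} {x : ℝ → Fin n → ℝ}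
    (h : Tendsto (fun t => enorm' (x t)) l (nhds 0)) : Tendsto x l (nhds 0) :=
  ((PiLp.continuous_ofLp 2 _).tendsto 0).comp (tendsto_zero_iff_norm_tendsto_zero.2 h)

lemma lyapunovStable_of_sq_le {K α : ℝ} (hK : 0 < K) (hα : 0 ≤ α)
    (h : ∀ x, IsSolution A B C D x → ∀ t ≥ 0,
      enorm' (x t) ^ 2 ≤ K * enorm' (x 0) ^ 2 * Real.exp (-(α * t))) :
    LyapunovStable A B C D := by
  intro ε hε
  refine ⟨ε / Real.sqrt K, by positivity, fun x hx hx0 t ht => ?_⟩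
  have hx0 : K * enorm' (x 0) ^ 2 < ε ^ 2 := by
    rw [lt_div_iff₀ (by positivity)] at hx0
    calc K * enorm' (x 0) ^ 2 = (enorm' (x 0) * Real.sqrt K) ^ 2 := by
          rw [mul_pow, Real.sq_sqrt hK.le, mul_comm]
      _ < ε ^ 2 := pow_lt_pow_left₀ hx0 (mul_nonneg (enorm'_nonneg _) (Real.sqrt_nonneg K))
          two_ne_zero
  have hexp : Real.exp (-(α * t)) ≤ 1 := Real.exp_le_one_iff.2 (neg_nonpos.2 (mul_nonneg hα ht))
  have : enorm' (x t) ^ 2 < ε ^ 2 :=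
    (h x hx t ht).trans_lt ((mul_le_of_le_one_right (by positivity) hexp).trans_lt hx0)
  exact lt_of_pow_lt_pow_left₀ 2 hε.le this

lemma tendsto_zero_of_sq_le {K α : ℝ} (hα : 0 < α) {x : ℝ → Fin n → ℝ}
    (h : ∀ t ≥ 0, enorm' (x t) ^ 2 ≤ K * enorm' (x 0) ^ 2 * Real.exp (-(α * t))) :
    Tendsto x atTop (nhds 0) := by
  have hbound : Tendsto (fun t => K * enorm' (x 0) ^ 2 * Real.exp (-(α * t))) atTop (nhds 0) := by
    simpa using (Real.tendsto_exp_atBot.comp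
      (tendsto_neg_atTop_atBot.comp (tendsto_id.const_mul_atTop hα))).const_mul
        (K * enorm' (x 0) ^ 2)
  have hsq : Tendsto (fun t => enorm' (x t) ^ 2) atTop (nhds 0) :=
    tendsto_of_tendsto_of_tendsto_of_le_of_le' tendsto_const_nhds hbound
      (Eventually.of_forall fun t => sq_nonneg _) (eventually_ge_atTop 0 |>.mono h)
  refine tendsto_zero_of_tendsto_enorm' ?_
  simpa [Real.sqrt_sq (enorm'_nonneg _)] using hsq.sqrt

lemma globallyAsympStable_of_lyapunov {V : (Fin n → ℝ) → ℝ} {c₁ c₂ α : ℝ} (hc₁ : 0 < c₁)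
    (hc₂ : 0 < c₂) (hα : 0 < α) (hlow : ∀ y, c₁ * enorm' y ^ 2 ≤ V y)
    (hup : ∀ y, V y ≤ c₂ * enorm' y ^ 2)
    (hdecay : ∀ x, IsSolution A B C D x → ∀ t ≥ 0, V (x t) ≤ V (x 0) * Real.exp (-(α * t))) :
    GloballyAsympStable A B C D := by
  have hsq : ∀ x, IsSolution A B C D x → ∀ t ≥ 0,
      enorm' (x t) ^ 2 ≤ c₂ / c₁ * enorm' (x 0) ^ 2 * Real.exp (-(α * t)) := by
    intro x hx t ht
    rw [div_mul_eq_mul_div, div_mul_eq_mul_div, le_div_iff₀ hc₁, mul_comm]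
    calc c₁ * enorm' (x t) ^ 2 ≤ V (x 0) * Real.exp (-(α * t)) := (hlow _).trans (hdecay x hx t ht)
      _ ≤ c₂ * enorm' (x 0) ^ 2 * Real.exp (-(α * t)) := by gcongr; exact hup _
  exact ⟨lyapunovStable_of_sq_le (by positivity) hα.le hsq,
    fun x hx => tendsto_zero_of_sq_le hα (hsq x hx)⟩

end Stability

lemma quadForm_deriv_eq_sumElim_dotProduct_fromBlocks {R : Type*} [CommSemiring R] {k l : Type*}
    [Fintype k] [Fintype l] (A : Matrix k k R) (B : Matrix k l R) (P : Matrix k k R)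
    (x : k → R) (w : l → R) :
    (A *ᵥ x + B *ᵥ w) ⬝ᵥ P *ᵥ x + x ⬝ᵥ P *ᵥ (A *ᵥ x + B *ᵥ w)
      = Sum.elim x w ⬝ᵥ fromBlocks (P * A + Aᵀ * P) (P * B) (Bᵀ * P) 0 *ᵥ Sum.elim x w := by
  simp only [sumElim_dotProduct_fromBlocks_mulVec, add_mulVec, mulVec_add, dotProduct_add,
    add_dotProduct, ← mulVec_mulVec, zero_mulVec, dotProduct_zero, dotProduct_mulVec x Aᵀ,
    dotProduct_mulVec w Bᵀ, vecMul_transpose]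
  ring

lemma quadForm_deriv_le_of_LMI {n m : ℕ} {A : Matrix (Fin n) (Fin n) ℝ}
    {B : Matrix (Fin n) (Fin m) ℝ} {C : Matrix (Fin m) (Fin n) ℝ} {D : Matrix (Fin m) (Fin m) ℝ}
    {P : Matrix (Fin n) (Fin n) ℝ} {Pi : Matrix (Fin m ⊕ Fin m) (Fin m ⊕ Fin m) ℝ}
    (hPi : Pi ∈ PiNN m) {ε : ℝ} (hε : 0 ≤ ε)
    (hLMI : ∀ ξ, ε * (ξ ⬝ᵥ ξ) ≤ ξ ⬝ᵥ (-(fromBlocks (P * A + Aᵀ * P) (P * B) (Bᵀ * P) 0 +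
        (fromBlocks C D 0 (1 : Matrix (Fin m) (Fin m) ℝ))ᵀ * Pi *
          fromBlocks C D 0 (1 : Matrix (Fin m) (Fin m) ℝ))) *ᵥ ξ)
    {x : Fin n → ℝ} {w : Fin m → ℝ} (hw : w = relu (C *ᵥ x + D *ᵥ w)) :
    (A *ᵥ x + B *ᵥ w) ⬝ᵥ P *ᵥ x + x ⬝ᵥ P *ᵥ (A *ᵥ x + B *ᵥ w) ≤ -(ε * (x ⬝ᵥ x)) := by
  have hG : fromBlocks C D 0 (1 : Matrix (Fin m) (Fin m) ℝ) *ᵥ Sum.elim x w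
      = Sum.elim (C *ᵥ x + D *ᵥ w) w := by
    simp [fromBlocks_mulVec]
  have hmult := dotProduct_mulVec_sumElim_relu_nonneg hPi (C *ᵥ x + D *ᵥ w)
  rw [← hw, ← hG, ← dotProduct_transpose_mul_mul_mulVec] at hmult
  have hξ : x ⬝ᵥ x ≤ Sum.elim x w ⬝ᵥ Sum.elim x w := by
    rw [sumElim_dotProduct_sumElim]
    exact le_add_of_nonneg_right (dotProduct_star_self_nonneg w)
  have hLMIξ := hLMI (Sum.elim x w)
  rw [neg_mulVec, dotProduct_neg, add_mulVec, dotProduct_add] at hLMIξ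
  rw [quadForm_deriv_eq_sumElim_dotProduct_fromBlocks]
  linarith [mul_le_mul_of_nonneg_left hξ hε]

theorem primal_LMI_implies_stability_general {n m : ℕ}
    (A : Matrix (Fin n) (Fin n) ℝ) (B : Matrix (Fin n) (Fin m) ℝ)
    (C : Matrix (Fin m) (Fin n) ℝ) (D : Matrix (Fin m) (Fin m) ℝ)
    (P : Matrix (Fin n) (Fin n) ℝ) (hP : P.PosDef)
    (Pi : Matrix (Fin m ⊕ Fin m) (Fin m ⊕ Fin m) ℝ) (hPi : Pi ∈ PiNN m)
    (hLMI : (-(fromBlocks (P * A + Aᵀ * P) (P * B) (Bᵀ * P) 0 +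
        (fromBlocks C D 0 (1 : Matrix (Fin m) (Fin m) ℝ))ᵀ * Pi *
          fromBlocks C D 0 (1 : Matrix (Fin m) (Fin m) ℝ))).PosDef) :
    GloballyAsympStable A B C D := by
  obtain ⟨ε, hε, hmargin⟩ := hLMI.exists_pos_mul_dotProduct_self_le
  obtain ⟨c₁, hc₁, hPlow⟩ := hP.exists_pos_mul_dotProduct_self_le
  obtain ⟨c₂, hc₂, hPup⟩ := P.exists_pos_dotProduct_mulVec_le
  refine globallyAsympStable_of_lyapunov (V := fun y => y ⬝ᵥ P *ᵥ y) hc₁ hc₂ (div_pos hε hc₂)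
    (fun y => by simpa [enorm'_sq] using hPlow y) (fun y => by simpa [enorm'_sq] using hPup y) ?_
  rintro x ⟨w, hw⟩ t ht
  rw [← neg_mul]
  refine le_mul_exp_of_hasDerivAt_le (fun s hs => (hw s hs).2.dotProduct_mulVec P)
    (fun s hs => ?_) ht
  calc _ ≤ -(ε * (x s ⬝ᵥ x s)) := quadForm_deriv_le_of_LMI hPi hε.le hmargin (hw s hs).1
    _ ≤ -(ε / c₂) * (x s ⬝ᵥ P *ᵥ x s) := by
      have := mul_le_mul_of_nonneg_left (hPup (x s)) (div_pos hε hc₂).le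
      rw [← mul_assoc, div_mul_cancel₀ _ hc₂.ne'] at this
      linarith

/-- If the primal LMI is feasible with a positive definite `P` and some `Π ∈ Π_NN`, then
the feedback system `Σ` is globally asymptotically stable. -/
theorem primal_LMI_implies_stability {n m : ℕ}
    (A : Matrix (Fin n) (Fin n) ℝ) (B : Matrix (Fin n) (Fin m) ℝ)
    (C : Matrix (Fin m) (Fin n) ℝ) (D : Matrix (Fin m) (Fin m) ℝ)
    (hD : opNorm D < 1)
    (P : Matrix (Fin n) (Fin n) ℝ) (hP : P.PosDef)
    (Pi : Matrix (Fin m ⊕ Fin m) (Fin m ⊕ Fin m) ℝ) (hPi : Pi ∈ PiNN m)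
    (hLMI : (-(fromBlocks (P * A + Aᵀ * P) (P * B) (Bᵀ * P) 0 +
        (fromBlocks C D 0 (1 : Matrix (Fin m) (Fin m) ℝ))ᵀ * Pi *
          fromBlocks C D 0 (1 : Matrix (Fin m) (Fin m) ℝ))).PosDef) :
    GloballyAsympStable A B C D :=
  primal_LMI_implies_stability_general A B C D P hP Pi hPi hLMI
end

section
/- Let A ∈ ℝ^{n×n}, B ∈ ℝ^{n×m}, C ∈ ℝ^{m×n}, D ∈ ℝ^{m×m} with ‖D‖ < 1, and let N ≥ 1 be an integer. Suppose matrices ℋ_0, …, ℋ_{2(N−1)} ∈ S^{n+m} satisfy the N-th order LMI relaxation: the N×N block Hankel matrix H̃_N with (i,j) block ℋ_{i+j−2} is positive semidefinite, nonzero, and of rank one; each ℋ_i is positive semidefinite; [A B] ℋ_i = [I_n 0] ℋ_{i+1} for i = 0,…,2N−3; [A B] ℋ_{2(N−1)} [I_n 0]^T + ([A B] ℋ_{2(N−1)} [I_n 0]^T)^T is positive semidefinite; the matrix [[-C, I_m − D],[0, I_m]] ℋ_i [[-C, I_m − D],[0, I_m]]^T has all entries nonnegative for each i; and every diagonal entry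 of [−C, I_m − D] ℋ_i [0, I_m]^T is zero for each i. Then there exist x ∈ ℝ^n with x ≠ 0, w ∈ ℝ^m with w ≥ 0 entrywise, and λ ≥ 0 such that A x + B w = λ x, w = Φ(C x + D w), and H̃_N = v_N v_N^T with v_N = (x, w, λ x, λ w, …, λ^{N−1} x, λ^{N−1} w). -/
open Matrix

/-- The `N×N` block Hankel matrix whose `(i,j)` block is `H (i+j)`. -/
def hankelBlock {n m : ℕ} (H : ℕ → Matrix (Fin n ⊕ Fin m) (Fin n ⊕ Fin m) ℝ) (N : ℕ) :
    Matrix (Fin N × (Fin n ⊕ Fin m)) (Fin N × (Fin n ⊕ Fin m)) ℝ :=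
  fun p q => H ((p.1 : ℕ) + (q.1 : ℕ)) p.2 q.2

/-!
A positive semidefinite rank-one block Hankel matrix factors as `u uᵀ` with blocks
`u₀, …, u_{N-1}`, so `ℋ_{i+j} = u_i u_jᵀ`. Hankel symmetry `u₁ u₀ᵀ = ℋ₁ = u₀ u₁ᵀ` forces
`u₁ = λ u₀`, hence `u_k = λ^k u₀`, and the shift condition `[A B] ℋ₀ = [I 0] ℋ₁` becomes
`[A B] u₀ = λ [I 0] u₀`. For a rank-one moment matrix `(x, w)(x, w)ᵀ` the ReLU conditions say that,
up to a global sign, `w ≥ 0`, `w - C x - D w ≥ 0` and `w ⊙ (w - C x - D w) = 0`, i.e.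
`w = Φ(C x + D w)`. As `Φ` is 1-Lipschitz and `‖D‖ < 1`, `x = 0` forces `w = 0`; this excludes
`x = 0`, and also `u₀ = 0`, because through the shift conditions a zero block `u_k` kills the `x`-part
of `u_{k+1}`. Finally the last condition makes `λ^{2N-1} ≥ 0` (directly `λ ≥ 0` when `N = 1`).
-/

namespace Matrix

variable {K ι κ : Type*} [Field K]

theorem vecMulVec_right_cancel₀ {a b : ι → K} {x : κ → K} (hx : x ≠ 0)
    (h : vecMulVec a x = vecMulVec b x) : a = b := by
  obtain ⟨k, hk⟩ := Function.ne_iff.mp hx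
  funext i
  exact mul_right_cancel₀ hk (by simpa only [vecMulVec_apply] using congrFun₂ h i k)

theorem exists_eq_smul_of_vecMulVec_comm {x y : ι → K} (hx : x ≠ 0)
    (h : vecMulVec y x = vecMulVec x y) : ∃ c : K, y = c • x := by
  obtain ⟨k, hk⟩ := Function.ne_iff.mp hx
  refine ⟨y k / x k, funext fun i => ?_⟩
  have hik : y i * x k = x i * y k := by simpa only [vecMulVec_apply] using congrFun₂ h i k
  rw [Pi.smul_apply, smul_eq_mul, div_mul_eq_mul_div, eq_div_iff hk, hik, mul_comm]

theorem exists_eq_vecMulVec_of_rank_eq_one [Fintype κ] {M : Matrix ι κ K} (hM : M.rank = 1) :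
    ∃ w c, w ≠ 0 ∧ M = vecMulVec w c := by
  classical
  rw [rank, finrank_eq_one_iff'] at hM
  obtain ⟨⟨w, _⟩, hw, hspan⟩ := hM
  choose c hc using fun j => hspan ⟨M *ᵥ Pi.single j 1, LinearMap.mem_range_self _ _⟩
  refine ⟨w, c, fun h => hw (Subtype.ext h), ?_⟩
  ext i j
  have := congrFun (congrArg Subtype.val (hc j)) i
  simp only [SetLike.val_smul, Pi.smul_apply, smul_eq_mul, mulVec_single_one, col_apply] at this
  rw [vecMulVec_apply, ← this, mul_comm]

theorem mul_vecMulVec_mul_transpose {o : Type*} [Fintype ι] (P : Matrix κ ι K)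
    (Q : Matrix o ι K) (v : ι → K) :
    P * vecMulVec v v * Qᵀ = vecMulVec (P *ᵥ v) (Q *ᵥ v) := by
  rw [mul_vecMulVec, vecMulVec_mul, vecMul_transpose]

theorem PosSemidef.exists_eq_vecMulVec_self_of_rank_eq_one [Fintype ι] {M : Matrix ι ι ℝ}
    (hM : M.PosSemidef) (hr : M.rank = 1) : ∃ u, u ≠ 0 ∧ M = vecMulVec u u := by
  obtain ⟨w, c, hw, rfl⟩ := exists_eq_vecMulVec_of_rank_eq_one hr
  have hcomm : vecMulVec c w = vecMulVec w c := by
    simpa [IsSymm, transpose_vecMulVec] using hM.isHermitian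
  obtain ⟨t, rfl⟩ := exists_eq_smul_of_vecMulVec_comm hw hcomm
  have ht : 0 ≤ t := by
    obtain ⟨k, hk⟩ := Function.ne_iff.mp hw
    have hkk := hM.diag_nonneg (i := k)
    simp only [vecMulVec_apply, Pi.smul_apply, smul_eq_mul] at hkk
    nlinarith [mul_self_pos.mpr hk]
  have ht0 : t ≠ 0 := by
    rintro rfl
    simp at hr
  refine ⟨√t • w, smul_ne_zero (Real.sqrt_ne_zero'.mpr (ht.lt_of_ne' ht0)) hw, ?_⟩
  ext i j
  simp only [vecMulVec_apply, Pi.smul_apply, smul_eq_mul]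
  linear_combination -(w i * w j) * Real.mul_self_sqrt ht

theorem exists_nonneg_smul_eq_of_posSemidef_vecMulVec_add [Fintype ι] {x y : ι → ℝ} (hx : x ≠ 0)
    (h : (vecMulVec y x + vecMulVec x y).PosSemidef) : ∃ c : ℝ, 0 ≤ c ∧ y = c • x := by
  have hq : ∀ z, 0 ≤ (z ⬝ᵥ x) * (z ⬝ᵥ y) := by
    intro z
    have hz := h.dotProduct_mulVec_nonneg z
    simp only [star_trivial, add_mulVec, vecMulVec_mulVec, op_smul_eq_smul, dotProduct_add,
      dotProduct_smul, smul_eq_mul, dotProduct_comm x z, dotProduct_comm y z] at hz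
    linarith
  have hxx : 0 < x ⬝ᵥ x :=
    (dotProduct_star_self_nonneg x).lt_of_ne' (dotProduct_self_eq_zero.not.mpr hx)
  set μ := (x ⬝ᵥ y) / (x ⬝ᵥ x)
  set z := y - μ • x
  have hzx : z ⬝ᵥ x = 0 := by
    simp only [z, μ, sub_dotProduct, smul_dotProduct, smul_eq_mul, dotProduct_comm y x]
    field_simp
    ring
  -- At `x + t • z`, `hq` reads `0 ≤ (x ⬝ᵥ x) (x ⬝ᵥ y + t (z ⬝ᵥ y))` for every `t`.
  have hzy : z ⬝ᵥ y = 0 := by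
    by_contra hne
    set t := -(x ⬝ᵥ y + 1) / (z ⬝ᵥ y)
    have ht : t * (z ⬝ᵥ y) = -(x ⬝ᵥ y + 1) := div_mul_cancel₀ _ hne
    have := hq (x + t • z)
    simp only [add_dotProduct, smul_dotProduct, hzx, smul_eq_mul, mul_zero, add_zero, ht] at this
    nlinarith
  refine ⟨μ, div_nonneg (by nlinarith [hq x]) hxx.le, ?_⟩
  have hzz : z ⬝ᵥ z = 0 := by
    rw [show z ⬝ᵥ z = z ⬝ᵥ y - μ * (z ⬝ᵥ x) by simp [z, dotProduct_sub, dotProduct_smul],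
      hzy, hzx, mul_zero, sub_zero]
  exact sub_eq_zero.mp (dotProduct_self_eq_zero.mp hzz)

end Matrix

section OrderedRing

variable {R : Type*} [CommRing R] [LinearOrder R] [IsStrictOrderedRing R]

theorem exists_sign_mul_nonneg {ι : Type*} (v : ι → R) (h : ∀ i j, 0 ≤ v i * v j) :
    ∃ σ : R, σ * σ = 1 ∧ ∀ i, 0 ≤ σ * v i := by
  by_cases hv : ∀ i, 0 ≤ v i
  · exact ⟨1, one_mul 1, fun i => by simpa using hv i⟩
  · obtain ⟨k, hk⟩ := not_forall.mp hv
    exact ⟨-1, by norm_num, fun i => by nlinarith [h i k]⟩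

theorem eq_max_sub_zero_of_mul_eq_zero {a s : R} (ha : 0 ≤ a) (hs : 0 ≤ s) (h : a * s = 0) :
    a = max (a - s) 0 := by
  rcases mul_eq_zero.mp h with rfl | rfl
  · simp [hs]
  · simp [ha]

end OrderedRing

theorem eq_zero_of_eq_relu_mulVec {m : ℕ} {D : Matrix (Fin m) (Fin m) ℝ} (hD : opNorm D < 1)
    {w : Fin m → ℝ} (hw : w = relu (D *ᵥ w)) : w = 0 := by
  have hcoord : ∀ i, |w i| ≤ |(D *ᵥ w) i| := fun i => by
    rw [congrFun hw i, relu, abs_of_nonneg (le_max_right _ _)]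
    exact max_le (le_abs_self _) (abs_nonneg _)
  have hle : ‖WithLp.toLp 2 w‖ ≤ opNorm D * ‖WithLp.toLp 2 w‖ :=
    calc ‖WithLp.toLp 2 w‖ ≤ ‖WithLp.toLp 2 (D *ᵥ w)‖ := by
          simp only [EuclideanSpace.norm_eq, Real.norm_eq_abs]
          exact Real.sqrt_le_sqrt
            (Finset.sum_le_sum fun i _ => pow_le_pow_left₀ (abs_nonneg _) (hcoord i) 2)
      _ ≤ opNorm D * ‖WithLp.toLp 2 w‖ := by
          rw [← toEuclideanCLM_toLp]
          exact ContinuousLinearMap.le_opNorm _ _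
  have hzero : ‖WithLp.toLp 2 w‖ = 0 := by nlinarith [norm_nonneg (WithLp.toLp 2 w)]
  simpa using hzero

section ReluRelaxation

variable {n m : ℕ} {C : Matrix (Fin m) (Fin n) ℝ} {D : Matrix (Fin m) (Fin m) ℝ}

variable (C D) in
/-- The relaxed constraints `w ≥ 0`, `w - C x - D w ≥ 0`, `w ⊙ (w - C x - D w) = 0` on a moment
matrix `K` of `(x, w)`; for `K = (x, w)(x, w)ᵀ` they pin `(x, w)` down only up to sign. -/
def ReluRelaxation (K : Matrix (Fin n ⊕ Fin m) (Fin n ⊕ Fin m) ℝ) : Prop :=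
  (∀ a b, 0 ≤ (fromBlocks (-C) (1 - D) 0 (1 : Matrix (Fin m) (Fin m) ℝ) * K *
      (fromBlocks (-C) (1 - D) 0 (1 : Matrix (Fin m) (Fin m) ℝ))ᵀ) a b) ∧
    ∀ j : Fin m, (fromCols (-C) (1 - D) * K *
      (fromCols (0 : Matrix (Fin m) (Fin n) ℝ) 1)ᵀ : Matrix (Fin m) (Fin m) ℝ) j j = 0

theorem ReluRelaxation.exists_sign {x : Fin n → ℝ} {w : Fin m → ℝ}
    (h : ReluRelaxation C D (vecMulVec (Sum.elim x w) (Sum.elim x w))) :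
    ∃ σ : ℝ, σ * σ = 1 ∧ (∀ i, 0 ≤ σ * w i) ∧
      σ • w = relu (C *ᵥ (σ • x) + D *ᵥ (σ • w)) := by
  obtain ⟨hnn, hdiag⟩ := h
  set s := w - (C *ᵥ x + D *ᵥ w)
  have hs : (-C) *ᵥ x + (1 - D) *ᵥ w = s := by
    simp only [neg_mulVec, sub_mulVec, one_mulVec, s]
    abel
  have hslack : fromBlocks (-C) (1 - D) 0 1 *ᵥ Sum.elim x w = Sum.elim s w := by
    simp only [fromBlocks_mulVec, Sum.elim_comp_inl, Sum.elim_comp_inr, hs, zero_mulVec,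
      one_mulVec, zero_add]
  have hcompl : ∀ j, s j * w j = 0 := fun j => by
    have := hdiag j
    -- `erw`: this product elaborates through the default `HMul` instance of `CStarMatrix`
    erw [mul_vecMulVec_mul_transpose] at this
    simpa only [fromCols_mulVec_sumElim, hs, zero_mulVec, one_mulVec,
      zero_add, vecMulVec_apply] using this
  rw [mul_vecMulVec_mul_transpose, hslack] at hnn
  obtain ⟨σ, hσ, hσv⟩ :=
    exists_sign_mul_nonneg (Sum.elim s w) fun a b => by simpa only [vecMulVec_apply] using hnn a b
  refine ⟨σ, hσ, fun i => hσv (.inr i), funext fun i => ?_⟩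
  have key := eq_max_sub_zero_of_mul_eq_zero (hσv (.inr i)) (hσv (.inl i))
    (by simp only [Sum.elim_inl, Sum.elim_inr]; linear_combination (σ * σ) * hcompl i)
  simp only [Sum.elim_inl, Sum.elim_inr, s, Pi.sub_apply, Pi.add_apply] at key
  simp only [relu, Pi.smul_apply, smul_eq_mul, mulVec_smul, Pi.add_apply]
  rw [key]
  congr 1
  ring

theorem ReluRelaxation.eq_zero_of_comp_inl_eq_zero (hD : opNorm D < 1)
    {v : Fin n ⊕ Fin m → ℝ} (h : ReluRelaxation C D (vecMulVec v v)) (hv : v ∘ Sum.inl = 0) :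
    v = 0 := by
  rw [← Sum.elim_comp_inl_inr v, hv] at h ⊢
  obtain ⟨σ, hσ, -, hrelu⟩ := h.exists_sign
  rw [smul_zero, mulVec_zero, zero_add] at hrelu
  rw [(smul_eq_zero_iff_right (left_ne_zero_of_mul_eq_one hσ)).mp
    (eq_zero_of_eq_relu_mulVec hD hrelu)]
  exact Sum.elim_zero_zero

end ReluRelaxation

section Moments

variable {n m N : ℕ} {H : ℕ → Matrix (Fin n ⊕ Fin m) (Fin n ⊕ Fin m) ℝ}

theorem exists_moments_of_hankelBlock_eq_vecMulVec {u : Fin N × (Fin n ⊕ Fin m) → ℝ}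
    (hu : u ≠ 0) (h : hankelBlock H N = vecMulVec u u) :
    ∃ U : ℕ → Fin n ⊕ Fin m → ℝ, (∃ k < N, U k ≠ 0) ∧
      ∀ i j, i < N → j < N → H (i + j) = vecMulVec (U i) (U j) := by
  refine ⟨fun k a => if hk : k < N then u (⟨k, hk⟩, a) else 0, ?_, fun i j hi hj => ?_⟩
  · obtain ⟨⟨k, a⟩, hka⟩ := Function.ne_iff.mp hu
    exact ⟨k, k.2, Function.ne_iff.mpr ⟨a, by simpa using hka⟩⟩
  · ext a b
    simpa [hankelBlock, hi, hj, vecMulVec_apply] using congrFun₂ h (⟨i, hi⟩, a) (⟨j, hj⟩, b)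

theorem hankelBlock_eq_vecMulVec_of_moments {v : Fin n ⊕ Fin m → ℝ} {c : ℝ}
    (hH : ∀ i j, i < N → j < N → H (i + j) = vecMulVec (c ^ i • v) (c ^ j • v)) :
    hankelBlock H N =
      vecMulVec (fun p : Fin N × (Fin n ⊕ Fin m) => c ^ (p.1 : ℕ) * v p.2)
        (fun p : Fin N × (Fin n ⊕ Fin m) => c ^ (p.1 : ℕ) * v p.2) := by
  ext ⟨i, a⟩ ⟨j, b⟩
  simp [hankelBlock, hH i j i.2 j.2, vecMulVec_apply]

end Moments

theorem moments_eq_pow_smul {K ι : Type*} [Field K] {N : ℕ} {H : ℕ → Matrix ι ι K}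
    {U : ℕ → ι → K} {c : K}
    (hU : ∀ i j, i < N → j < N → H (i + j) = vecMulVec (U i) (U j)) (h0 : U 0 ≠ 0)
    (h1 : U 1 = c • U 0) : ∀ k < N, U k = c ^ k • U 0 := by
  intro k hk
  induction k with
  | zero => rw [pow_zero, one_smul]
  | succ k ih =>
    refine vecMulVec_right_cancel₀ h0 ?_
    calc vecMulVec (U (k + 1)) (U 0) = H (k + 1) := (hU _ _ hk (by omega)).symm
      _ = vecMulVec (U k) (U 1) := hU _ _ (by omega) (by omega)
      _ = vecMulVec (c ^ (k + 1) • U 0) (U 0) := by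
        rw [h1, ih (by omega), vecMulVec_smul, smul_vecMulVec, smul_vecMulVec, smul_smul, pow_succ']

section Relaxation

variable {n m N : ℕ} {A : Matrix (Fin n) (Fin n) ℝ} {B : Matrix (Fin n) (Fin m) ℝ}
  {C : Matrix (Fin m) (Fin n) ℝ} {D : Matrix (Fin m) (Fin m) ℝ}
  {H : ℕ → Matrix (Fin n ⊕ Fin m) (Fin n ⊕ Fin m) ℝ} {U : ℕ → Fin n ⊕ Fin m → ℝ}

theorem fromCols_one_zero_mulVec (v : Fin n ⊕ Fin m → ℝ) :
    fromCols (1 : Matrix (Fin n) (Fin n) ℝ) 0 *ᵥ v = v ∘ Sum.inl := by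
  simp

/- The next two lemmas spell `[I 0]` as in the LMI conditions, so that their products elaborate,
like those, through the default `HMul` instance of `CStarMatrix` and `rw` can use them. -/
theorem fromCols_one_zero_mul_vecMulVec {κ : Type*} (v : Fin n ⊕ Fin m → ℝ) (w : κ → ℝ) :
    fromCols (1 : Matrix (Fin n) (Fin n) ℝ) 0 * vecMulVec v w = vecMulVec (v ∘ Sum.inl) w :=
  (mul_vecMulVec _ v w).trans (by rw [fromCols_one_zero_mulVec])

theorem mul_vecMulVec_mul_fromCols_one_zero_transpose {κ : Type*}
    (P : Matrix κ (Fin n ⊕ Fin m) ℝ) (v : Fin n ⊕ Fin m → ℝ) :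
    P * vecMulVec v v * (fromCols (1 : Matrix (Fin n) (Fin n) ℝ) 0)ᵀ =
      vecMulVec (P *ᵥ v) (v ∘ Sum.inl) :=
  (mul_vecMulVec_mul_transpose P _ v).trans (by rw [fromCols_one_zero_mulVec])

theorem moment_succ_eq_zero (hD : opNorm D < 1)
    (hU : ∀ i j, i < N → j < N → H (i + j) = vecMulVec (U i) (U j))
    (hshift : ∀ i, i + 3 ≤ 2 * N →
      fromCols A B * H i = fromCols (1 : Matrix (Fin n) (Fin n) ℝ) 0 * H (i + 1))
    (hrelu : ∀ i, i + 2 ≤ 2 * N → ReluRelaxation C D (H i))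
    {k : ℕ} (hk : k + 1 < N) (hUk : U k = 0) : U (k + 1) = 0 := by
  have hodd : H (2 * k + 1) = 0 := by
    rw [show 2 * k + 1 = k + (k + 1) by ring, hU _ _ (by omega) hk, hUk, zero_vecMulVec]
  have heven : H (2 * k + 2) = vecMulVec (U (k + 1)) (U (k + 1)) := by
    rw [show 2 * k + 2 = k + 1 + (k + 1) by ring, hU _ _ hk hk]
  have hshifted : vecMulVec (U (k + 1) ∘ Sum.inl) (U (k + 1)) = 0 := by
    rw [← fromCols_one_zero_mul_vecMulVec, ← heven, ← hshift _ (by omega), hodd, Matrix.mul_zero]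
  have hinl : U (k + 1) ∘ Sum.inl = 0 := funext fun i =>
    mul_self_eq_zero.mp (by simpa [vecMulVec_apply] using congrFun₂ hshifted i (Sum.inl i))
  exact ReluRelaxation.eq_zero_of_comp_inl_eq_zero hD (heven ▸ hrelu _ (by omega)) hinl

theorem moment_zero_ne_zero (hD : opNorm D < 1)
    (hU : ∀ i j, i < N → j < N → H (i + j) = vecMulVec (U i) (U j))
    (hshift : ∀ i, i + 3 ≤ 2 * N →
      fromCols A B * H i = fromCols (1 : Matrix (Fin n) (Fin n) ℝ) 0 * H (i + 1))
    (hrelu : ∀ i, i + 2 ≤ 2 * N → ReluRelaxation C D (H i))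
    {k : ℕ} (hk : k < N) (hUk : U k ≠ 0) : U 0 ≠ 0 := by
  intro h0
  induction k with
  | zero => exact hUk h0
  | succ k ih => exact ih (by omega) fun hk' => hUk (moment_succ_eq_zero hD hU hshift hrelu hk hk')

theorem fromCols_mulVec_eq_smul_of_moment_one (hN : 2 ≤ N)
    (hU : ∀ i j, i < N → j < N → H (i + j) = vecMulVec (U i) (U j))
    (hshift : ∀ i, i + 3 ≤ 2 * N →
      fromCols A B * H i = fromCols (1 : Matrix (Fin n) (Fin n) ℝ) 0 * H (i + 1))
    (h0 : U 0 ≠ 0) {c : ℝ} (hc : U 1 = c • U 0) :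
    fromCols A B *ᵥ U 0 = c • (U 0 ∘ Sum.inl) := by
  have hH0 : H 0 = vecMulVec (U 0) (U 0) := hU 0 0 (by omega) (by omega)
  have hH1 : H 1 = vecMulVec (U 0) (U 1) := hU 0 1 (by omega) (by omega)
  have hshift0 := hshift 0 (by omega)
  rw [zero_add, hH0, hH1, mul_vecMulVec, fromCols_one_zero_mul_vecMulVec, hc] at hshift0
  refine vecMulVec_right_cancel₀ h0 (hshift0.trans ?_)
  ext a b
  simp only [vecMulVec_apply, Pi.smul_apply, Function.comp_apply, smul_eq_mul]
  ring

theorem exists_geometric_moments (hN : 0 < N)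
    (hU : ∀ i j, i < N → j < N → H (i + j) = vecMulVec (U i) (U j))
    (hshift : ∀ i, i + 3 ≤ 2 * N →
      fromCols A B * H i = fromCols (1 : Matrix (Fin n) (Fin n) ℝ) 0 * H (i + 1))
    (hHe : (fromCols A B * H (2 * (N - 1)) *
        (fromCols (1 : Matrix (Fin n) (Fin n) ℝ) 0)ᵀ +
      (fromCols A B * H (2 * (N - 1)) *
        (fromCols (1 : Matrix (Fin n) (Fin n) ℝ) 0)ᵀ)ᵀ).PosSemidef)
    (hx : U 0 ∘ Sum.inl ≠ 0) :
    ∃ c : ℝ, 0 ≤ c ∧ fromCols A B *ᵥ U 0 = c • (U 0 ∘ Sum.inl) ∧ ∀ k < N, U k = c ^ k • U 0 := by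
  have h0 : U 0 ≠ 0 := fun h => hx (by rw [h]; rfl)
  have hlast : (vecMulVec (fromCols A B *ᵥ U (N - 1)) (U (N - 1) ∘ Sum.inl) +
      vecMulVec (U (N - 1) ∘ Sum.inl) (fromCols A B *ᵥ U (N - 1))).PosSemidef := by
    have hH := hU (N - 1) (N - 1) (by omega) (by omega)
    rw [show N - 1 + (N - 1) = 2 * (N - 1) by omega] at hH
    rwa [hH, mul_vecMulVec_mul_fromCols_one_zero_transpose, transpose_vecMulVec] at hHe
  rcases Nat.lt_or_ge N 2 with hN1 | hN2
  · obtain rfl : N = 1 := by omega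
    obtain ⟨c, hc, hy⟩ := exists_nonneg_smul_eq_of_posSemidef_vecMulVec_add hx hlast
    refine ⟨c, hc, hy, fun k hk => ?_⟩
    obtain rfl : k = 0 := by omega
    rw [pow_zero, one_smul]
  · obtain ⟨c, hc1⟩ := exists_eq_smul_of_vecMulVec_comm h0
      ((hU 1 0 (by omega) hN).symm.trans (hU 0 1 hN (by omega)))
    have hpow := moments_eq_pow_smul hU h0 hc1
    have heig := fromCols_mulVec_eq_smul_of_moment_one hN2 hU hshift h0 hc1
    refine ⟨c, ?_, heig, hpow⟩
    have hodd : (vecMulVec (c ^ (2 * N - 1) • (U 0 ∘ Sum.inl)) (U 0 ∘ Sum.inl) +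
        vecMulVec (U 0 ∘ Sum.inl) (c ^ (2 * N - 1) • (U 0 ∘ Sum.inl))).PosSemidef := by
      rw [hpow (N - 1) (by omega), mulVec_smul, heig] at hlast
      convert hlast using 1
      ext a b
      simp only [Matrix.add_apply, vecMulVec_apply, Pi.smul_apply, Function.comp_apply, smul_eq_mul]
      rw [show 2 * N - 1 = (N - 1) + 1 + (N - 1) by omega]
      ring
    obtain ⟨d, hd, hcd⟩ := exists_nonneg_smul_eq_of_posSemidef_vecMulVec_add hx hodd
    have hcd' : c ^ (2 * N - 1) = d := smul_left_injective ℝ hx hcd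
    exact (Odd.pow_nonneg_iff ⟨N - 1, by omega⟩).mp (hcd' ▸ hd)

end Relaxation

theorem relaxation_rank_one_extraction_general {n m : ℕ}
    (A : Matrix (Fin n) (Fin n) ℝ) (B : Matrix (Fin n) (Fin m) ℝ)
    (C : Matrix (Fin m) (Fin n) ℝ) (D : Matrix (Fin m) (Fin m) ℝ)
    (hD : opNorm D < 1)
    (N : ℕ)
    (H : ℕ → Matrix (Fin n ⊕ Fin m) (Fin n ⊕ Fin m) ℝ)
    (hPSDblock : (hankelBlock H N).PosSemidef)
    (hrank : (hankelBlock H N).rank = 1)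
    (hshift : ∀ i, i + 3 ≤ 2 * N →
      fromCols A B * H i = fromCols (1 : Matrix (Fin n) (Fin n) ℝ) 0 * H (i + 1))
    (hHe : (fromCols A B * H (2 * (N - 1)) *
        (fromCols (1 : Matrix (Fin n) (Fin n) ℝ) 0)ᵀ +
      (fromCols A B * H (2 * (N - 1)) *
        (fromCols (1 : Matrix (Fin n) (Fin n) ℝ) 0)ᵀ)ᵀ).PosSemidef)
    (hnn : ∀ i, i + 2 ≤ 2 * N → ∀ a b,
      0 ≤ (fromBlocks (-C) (1 - D) 0 (1 : Matrix (Fin m) (Fin m) ℝ) * H i *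
        (fromBlocks (-C) (1 - D) 0 (1 : Matrix (Fin m) (Fin m) ℝ))ᵀ) a b)
    (hdiag : ∀ i, i + 2 ≤ 2 * N → ∀ j : Fin m,
      (fromCols (-C) (1 - D) * H i *
        (fromCols (0 : Matrix (Fin m) (Fin n) ℝ) 1)ᵀ : Matrix (Fin m) (Fin m) ℝ) j j = 0) :
    ∃ (x : Fin n → ℝ) (w : Fin m → ℝ) (lam : ℝ),
      x ≠ 0 ∧ (∀ i, 0 ≤ w i) ∧ 0 ≤ lam ∧
      A.mulVec x + B.mulVec w = lam • x ∧
      w = relu (C.mulVec x + D.mulVec w) ∧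
      hankelBlock H N =
        vecMulVec (fun p : Fin N × (Fin n ⊕ Fin m) => lam ^ (p.1 : ℕ) * Sum.elim x w p.2)
          (fun p : Fin N × (Fin n ⊕ Fin m) => lam ^ (p.1 : ℕ) * Sum.elim x w p.2) := by
  obtain ⟨u, hu, hHu⟩ := hPSDblock.exists_eq_vecMulVec_self_of_rank_eq_one hrank
  obtain ⟨U, ⟨k, hk, hUk⟩, hU⟩ := exists_moments_of_hankelBlock_eq_vecMulVec hu hHu
  have hN : 0 < N := by omega
  have hrelu : ∀ i, i + 2 ≤ 2 * N → ReluRelaxation C D (H i) := fun i hi => ⟨hnn i hi, hdiag i hi⟩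
  have hU0 : U 0 ≠ 0 := moment_zero_ne_zero hD hU hshift hrelu hk hUk
  have hrelu0 : ReluRelaxation C D (vecMulVec (U 0) (U 0)) := hU 0 0 hN hN ▸ hrelu 0 (by omega)
  have hp : U 0 ∘ Sum.inl ≠ 0 := fun h => hU0 (hrelu0.eq_zero_of_comp_inl_eq_zero hD h)
  obtain ⟨σ, hσ, hw, hΦ⟩ := (Sum.elim_comp_inl_inr (U 0) ▸ hrelu0).exists_sign
  obtain ⟨lam, hlam, heig, hpow⟩ := exists_geometric_moments hN hU hshift hHe hp
  refine ⟨σ • (U 0 ∘ Sum.inl), σ • (U 0 ∘ Sum.inr), lam,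
    smul_ne_zero (left_ne_zero_of_mul_eq_one hσ) hp, hw, hlam, ?_, hΦ, ?_⟩
  · rw [mulVec_smul, mulVec_smul, ← smul_add, ← fromCols_mulVec_sumElim, Sum.elim_comp_inl_inr,
      heig, smul_comm]
  · have hv : Sum.elim (σ • (U 0 ∘ Sum.inl)) (σ • (U 0 ∘ Sum.inr)) = σ • U 0 := by
      ext (a | a) <;> rfl
    rw [hv]
    refine hankelBlock_eq_vecMulVec_of_moments fun i j hi hj => ?_
    ext a b
    rw [hU i j hi hj, hpow i hi, hpow j hj]
    simp only [vecMulVec_apply, Pi.smul_apply, smul_eq_mul]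
    linear_combination -(lam ^ i * U 0 a * (lam ^ j * U 0 b)) * hσ

/-- If the matrices `ℋ_0, …, ℋ_{2(N−1)}` satisfy the `N`-th order LMI relaxation and the
block Hankel matrix is nonzero of rank one, then one can extract `x ≠ 0`, `w ≥ 0` and
`λ ≥ 0` with `A x + B w = λ x`, `w = Φ(C x + D w)`, and
`H̃_N = v_N v_Nᵀ` with `v_N = (x, w, λ x, λ w, …, λ^{N−1} x, λ^{N−1} w)`. -/
theorem relaxation_rank_one_extraction {n m : ℕ}
    (A : Matrix (Fin n) (Fin n) ℝ) (B : Matrix (Fin n) (Fin m) ℝ)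
    (C : Matrix (Fin m) (Fin n) ℝ) (D : Matrix (Fin m) (Fin m) ℝ)
    (hD : opNorm D < 1)
    (N : ℕ) (hN : 1 ≤ N)
    (H : ℕ → Matrix (Fin n ⊕ Fin m) (Fin n ⊕ Fin m) ℝ)
    (hPSDblock : (hankelBlock H N).PosSemidef)
    (hne : hankelBlock H N ≠ 0)
    (hrank : (hankelBlock H N).rank = 1)
    (hPSDi : ∀ i, i + 2 ≤ 2 * N → (H i).PosSemidef)
    (hshift : ∀ i, i + 3 ≤ 2 * N →
      fromCols A B * H i = fromCols (1 : Matrix (Fin n) (Fin n) ℝ) 0 * H (i + 1))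
    (hHe : (fromCols A B * H (2 * (N - 1)) *
        (fromCols (1 : Matrix (Fin n) (Fin n) ℝ) 0)ᵀ +
      (fromCols A B * H (2 * (N - 1)) *
        (fromCols (1 : Matrix (Fin n) (Fin n) ℝ) 0)ᵀ)ᵀ).PosSemidef)
    (hnn : ∀ i, i + 2 ≤ 2 * N → ∀ a b,
      0 ≤ (fromBlocks (-C) (1 - D) 0 (1 : Matrix (Fin m) (Fin m) ℝ) * H i *
        (fromBlocks (-C) (1 - D) 0 (1 : Matrix (Fin m) (Fin m) ℝ))ᵀ) a b)
    (hdiag : ∀ i, i + 2 ≤ 2 * N → ∀ j : Fin m,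
      (fromCols (-C) (1 - D) * H i *
        (fromCols (0 : Matrix (Fin m) (Fin n) ℝ) 1)ᵀ : Matrix (Fin m) (Fin m) ℝ) j j = 0) :
    ∃ (x : Fin n → ℝ) (w : Fin m → ℝ) (lam : ℝ),
      x ≠ 0 ∧ (∀ i, 0 ≤ w i) ∧ 0 ≤ lam ∧
      A.mulVec x + B.mulVec w = lam • x ∧
      w = relu (C.mulVec x + D.mulVec w) ∧
      hankelBlock H N =
        vecMulVec (fun p : Fin N × (Fin n ⊕ Fin m) => lam ^ (p.1 : ℕ) * Sum.elim x w p.2)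
          (fun p : Fin N × (Fin n ⊕ Fin m) => lam ^ (p.1 : ℕ) * Sum.elim x w p.2) :=
  relaxation_rank_one_extraction_general A B C D hD N H hPSDblock hrank hshift hHe hnn hdiag
end
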